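/- For every connection form ω there exists a unique pair (ωᴳ, G) such that ω = ωᴳ + G, where ωᴳ is a connection form adapted to v and G : V → End(V) is linear with G(u) η-skew and h ∘ G(u) ∘ h = 0 for every u ∈ V. Moreover, G is given explicitly by G(u)x = η(Dωv(u), x)·v − η(v, x)·Dωv(u), where Dωv(u) = dv(u) + ω(u)v. -/

import Mathlib

/- Minkowski space V = ℝ⁴ with bilinear form η. -/
abbrev V4 := Fin 4 → ℝ

def eta (x y : V4) : ℝ := -(x 0 * y 0) + x 1 * y 1 + x 2 * y 2 + x 3 * y 3

/-- `f : V → V` is linear. -/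
def IsLin (f : V4 → V4) : Prop :=
  (∀ x y, f (x + y) = f x + f y) ∧ ∀ (c : ℝ) (x : V4), f (c • x) = c • f x

/-- `f` is η-skew: η(f x, y) = −η(x, f y). -/
def IsSkew (f : V4 → V4) : Prop := ∀ x y, eta (f x) y = - eta x (f y)

/-- A connection form: a linear map `ω : V → End V` with each `ω u` η-skew. -/
def ConnForm (ω : V4 → V4 → V4) : Prop :=
  (∀ u u', ω (u + u') = ω u + ω u') ∧ (∀ (c : ℝ) (u : V4), ω (c • u) = c • ω u) ∧
  (∀ u, IsLin (ω u)) ∧ (∀ u, IsSkew (ω u))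

/-- Projection onto the η-orthogonal complement of `v`:  h(x) = x + η(v,x)·v. -/
def proj (v : V4) (x : V4) : V4 := x + eta v x • v

/-- The pair `(ωᴳ, G)` decomposes `ω`: `ωᴳ` is a connection form adapted to `v`
(i.e. `Dᴳv = dv + ωᴳ(·)v = 0`), `G : V → End V` is linear, each `G u` is η-skew with
`h ∘ G u ∘ h = 0`, and `ω = ωᴳ + G`. -/
def GoodPair (v : V4) (dv : V4 → V4) (ω : V4 → V4 → V4)
    (p : (V4 → V4 → V4) × (V4 → V4 → V4)) : Prop :=
  ConnForm p.1 ∧ (∀ u, dv u + p.1 u v = 0) ∧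
  (∀ u u', p.2 (u + u') = p.2 u + p.2 u') ∧
  (∀ (c : ℝ) (u : V4), p.2 (c • u) = c • p.2 u) ∧
  (∀ u, IsLin (p.2 u)) ∧ (∀ u, IsSkew (p.2 u)) ∧
  (∀ u x, proj v (p.2 u (proj v x)) = 0) ∧
  (∀ u x, ω u x = p.1 u x + p.2 u x)

/-! An η-skew endomorphism `f` with `h ∘ f ∘ h = 0` is determined by `f v`: it is
`x ↦ η(f v, x) v − η(v, x) f v`. For the second component `G` of a decomposition, adaptedness of
`ω − G` gives `G(u) v = Dωv(u)`, which yields uniqueness and the formula. Conversely, since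
`η(Dωv(u), v) = 0`, the `G` so defined is skew, linear in `u`, has vanishing spatial part and
satisfies `G(u) v = Dωv(u)`, so `ω − G` is a connection form adapted to `v`. -/

lemma eta_comm (x y : V4) : eta x y = eta y x := by unfold eta; ring

lemma eta_add_left (x y z : V4) : eta (x + y) z = eta x z + eta y z := by
  simp only [eta, Pi.add_apply]; ring

lemma eta_add_right (x y z : V4) : eta x (y + z) = eta x y + eta x z := by
  rw [eta_comm, eta_add_left, eta_comm y, eta_comm z]

lemma eta_smul_left (c : ℝ) (x y : V4) : eta (c • x) y = c * eta x y := by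
  simp only [eta, Pi.smul_apply, smul_eq_mul]; ring

lemma eta_smul_right (c : ℝ) (x y : V4) : eta x (c • y) = c * eta x y := by
  rw [eta_comm, eta_smul_left, eta_comm]

lemma eta_sub_left (x y z : V4) : eta (x - y) z = eta x z - eta y z := by
  simp only [eta, Pi.sub_apply]; ring

lemma eta_sub_right (x y z : V4) : eta x (y - z) = eta x y - eta x z := by
  rw [eta_comm, eta_sub_left, eta_comm y, eta_comm z]

lemma IsSkew.eta_apply_self {f : V4 → V4} (hf : IsSkew f) (x : V4) : eta (f x) x = 0 := by
  have h := hf x x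
  rw [eta_comm x] at h
  linarith

lemma eta_proj (v : V4) (hv : eta v v = -1) (x : V4) : eta v (proj v x) = 0 := by
  rw [proj, eta_add_right, eta_smul_right, hv]; ring

lemma proj_smul_self (v : V4) (hv : eta v v = -1) (c : ℝ) : proj v (c • v) = 0 := by
  rw [proj, eta_smul_right, hv, mul_neg_one, neg_smul, add_neg_cancel]

lemma proj_add_smul (v x : V4) : proj v x + (-eta v x) • v = x := by
  rw [proj, neg_smul, add_neg_cancel_right]

def wedgeOp (a b : V4) (x : V4) : V4 := eta a x • b - eta b x • a

lemma isLin_wedgeOp (a b : V4) : IsLin (wedgeOp a b) := by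
  refine ⟨fun x y => ?_, fun c x => ?_⟩
  · simp only [wedgeOp, eta_add_right, add_smul]; abel
  · simp only [wedgeOp, eta_smul_right]; module

lemma isSkew_wedgeOp (a b : V4) : IsSkew (wedgeOp a b) := by
  intro x y
  simp only [wedgeOp, eta_sub_left, eta_sub_right, eta_smul_left, eta_smul_right]
  rw [eta_comm x a, eta_comm x b]
  ring

lemma wedgeOp_add_left (a a' b : V4) : wedgeOp (a + a') b = wedgeOp a b + wedgeOp a' b := by
  funext x
  simp only [wedgeOp, Pi.add_apply, eta_add_left, add_smul, smul_add]; abel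

lemma wedgeOp_smul_left (c : ℝ) (a b : V4) : wedgeOp (c • a) b = c • wedgeOp a b := by
  funext x
  simp only [wedgeOp, Pi.smul_apply, eta_smul_left]; module

lemma wedgeOp_apply_right (v a : V4) (hv : eta v v = -1) (ha : eta a v = 0) :
    wedgeOp a v v = a := by
  rw [wedgeOp, ha, hv, zero_smul, zero_sub, neg_smul, one_smul, neg_neg]

lemma proj_wedgeOp_proj (v a : V4) (hv : eta v v = -1) (x : V4) :
    proj v (wedgeOp a v (proj v x)) = 0 := by
  rw [wedgeOp, eta_proj v hv, zero_smul, sub_zero, proj_smul_self v hv]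

lemma IsSkew.eq_wedgeOp {f : V4 → V4} (hlin : IsLin f) (hskew : IsSkew f) (v : V4)
    (hproj : ∀ x, proj v (f (proj v x)) = 0) (x : V4) :
    f x = wedgeOp (f v) v x := by
  set w := f (proj v x)
  -- `h w = 0` forces `w` onto the line of `v`; skewness then identifies the coefficient.
  have hw : w = (-eta v w) • v := by
    rw [neg_smul, eq_neg_iff_add_eq_zero]; exact hproj x
  have hcoef : eta v w = -eta (f v) x := by
    have hx : eta (f v) (proj v x) = eta (f v) x := by
      rw [proj, eta_add_right, eta_smul_right, hskew.eta_apply_self, mul_zero, add_zero]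
    rw [← hx, hskew v (proj v x), neg_neg]
  calc f x = f (proj v x + (-eta v x) • v) := by rw [proj_add_smul]
    _ = w + (-eta v x) • f v := by rw [hlin.1, hlin.2]
    _ = wedgeOp (f v) v x := by rw [hw, hcoef, neg_neg, wedgeOp, neg_smul, ← sub_eq_add_neg]

lemma ConnForm.sub {ω ω' : V4 → V4 → V4} (hω : ConnForm ω) (hω' : ConnForm ω') :
    ConnForm (ω - ω') := by
  obtain ⟨hadd, hsmul, hlin, hskew⟩ := hω
  obtain ⟨hadd', hsmul', hlin', hskew'⟩ := hω'
  refine ⟨fun u u' => ?_, fun c u => ?_, fun u => ⟨fun x y => ?_, fun c x => ?_⟩,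
    fun u x y => ?_⟩
  · rw [Pi.sub_apply, Pi.sub_apply, Pi.sub_apply, hadd, hadd']; abel
  · rw [Pi.sub_apply, Pi.sub_apply, hsmul, hsmul', smul_sub]
  · simp only [Pi.sub_apply, (hlin u).1, (hlin' u).1]; abel
  · simp only [Pi.sub_apply, (hlin u).2, (hlin' u).2, smul_sub]
  · simp only [Pi.sub_apply, eta_sub_left, eta_sub_right, hskew u x y, hskew' u x y]; ring

lemma connForm_wedgeOp {D : V4 → V4} (hD : IsLin D) (v : V4) :
    ConnForm (fun u => wedgeOp (D u) v) :=
  ⟨fun u u' => by simp only [hD.1, wedgeOp_add_left],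
    fun c u => by simp only [hD.2, wedgeOp_smul_left],
    fun u => isLin_wedgeOp _ _, fun u => isSkew_wedgeOp _ _⟩

lemma isLin_covDeriv {dv : V4 → V4} (hdv : IsLin dv) {ω : V4 → V4 → V4} (hω : ConnForm ω)
    (v : V4) : IsLin (fun u => dv u + ω u v) := by
  refine ⟨fun u u' => ?_, fun c u => ?_⟩
  · simp only [hdv.1, hω.1, Pi.add_apply]; abel
  · simp only [hdv.2, hω.2.1, Pi.smul_apply, smul_add]

lemma eta_covDeriv_left {v : V4} {dv : V4 → V4} (hdv : ∀ u, eta v (dv u) = 0)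
    {ω : V4 → V4 → V4} (hω : ConnForm ω) (u : V4) : eta (dv u + ω u v) v = 0 := by
  rw [eta_add_left, eta_comm, hdv, (hω.2.2.2 u).eta_apply_self, add_zero]

lemma GoodPair.snd_apply {v : V4} {dv : V4 → V4} {ω : V4 → V4 → V4}
    {p : (V4 → V4 → V4) × (V4 → V4 → V4)} (hp : GoodPair v dv ω p) (u x : V4) :
    p.2 u x = wedgeOp (dv u + ω u v) v x := by
  obtain ⟨-, hadapt, -, -, hlin, hskew, hproj, hdecomp⟩ := hp
  have hv : p.2 u v = dv u + ω u v := by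
    rw [hdecomp, ← add_assoc, hadapt, zero_add]
  rw [← hv]
  exact (hskew u).eq_wedgeOp (hlin u) v (hproj u) x

lemma GoodPair.fst_apply {v : V4} {dv : V4 → V4} {ω : V4 → V4 → V4}
    {p : (V4 → V4 → V4) × (V4 → V4 → V4)} (hp : GoodPair v dv ω p) (u x : V4) :
    p.1 u x = ω u x - p.2 u x := by
  rw [hp.2.2.2.2.2.2.2, add_sub_cancel_right]

lemma goodPair_wedgeOp {v : V4} (hv : eta v v = -1) {dv : V4 → V4} (hdvlin : IsLin dv)
    (hdvorth : ∀ u, eta v (dv u) = 0) {ω : V4 → V4 → V4} (hω : ConnForm ω) :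
    GoodPair v dv ω
      (ω - fun u => wedgeOp (dv u + ω u v) v, fun u => wedgeOp (dv u + ω u v) v) := by
  have hG := connForm_wedgeOp (isLin_covDeriv hdvlin hω v) v
  refine ⟨hω.sub hG, fun u => ?_, hG.1, hG.2.1, hG.2.2.1, hG.2.2.2,
    fun u => proj_wedgeOp_proj v _ hv, fun u x => ?_⟩
  · simp only [Pi.sub_apply, wedgeOp_apply_right v _ hv (eta_covDeriv_left hdvorth hω u)]
    abel
  · simp only [Pi.sub_apply, sub_add_cancel]

/-- Every connection form `ω` decomposes uniquely as
`ω = ωᴳ + G` with `ωᴳ` adapted to `v` and `G` a 1-form with η-skew values whose spatial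
part vanishes; moreover `G(u)x = η(Dωv(u),x)·v − η(v,x)·Dωv(u)` where `Dωv(u) = dv(u) + ω(u)v`. -/
theorem statement0 (v : V4) (hv : eta v v = -1)
    (dv : V4 → V4) (hdvlin : IsLin dv) (hdvorth : ∀ u, eta v (dv u) = 0)
    (ω : V4 → V4 → V4) (hω : ConnForm ω) :
    (∃! p : (V4 → V4 → V4) × (V4 → V4 → V4), GoodPair v dv ω p) ∧
    (∀ p : (V4 → V4 → V4) × (V4 → V4 → V4), GoodPair v dv ω p →
      ∀ u x, p.2 u x = eta (dv u + ω u v) x • v - eta v x • (dv u + ω u v)) := by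
  refine ⟨⟨_, goodPair_wedgeOp hv hdvlin hdvorth hω, fun p hp => ?_⟩,
    fun p hp u x => hp.snd_apply u x⟩
  have hsnd : p.2 = fun u => wedgeOp (dv u + ω u v) v := funext₂ hp.snd_apply
  refine Prod.ext (funext₂ fun u x => ?_) hsnd
  rw [hp.fst_apply, hsnd]
  rfl
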